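/- arXiv:1601.02269 — 2 statements merged into one kernel-verified Lean document; each statement's English description precedes it below -/
import Mathlib

section
/- Let (W,S,*) be any twisted Coxeter system and let x, y ∈ I_* be twisted involutions. Then every atom w ∈ A_*(x,y) satisfies w* y ≤ x w in the Bruhat order on W; that is, A_*(x,y) ⊆ B'_*(x,y) := {w ∈ W : w* y ≤ x w}. -/
open CoxeterSystem
open scoped Classical

variable {B W : Type*} [Group W] {M : CoxeterMatrix B}

/-- One step of the twisted conjugation action of the `0`-Hecke monoid on
twisted involutions: `x ⋉ s = (s*)⁻¹ ∘ x ∘ s` where `∘` is the Demazure product. -/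
noncomputable def invStep (cs : CoxeterSystem M W) (σ : W → W) (x : W) (i : B) : W :=
  if cs.length (x * cs.simple i) < cs.length x then x
  else if σ (cs.simple i) * x = x * cs.simple i then x * cs.simple i
  else σ (cs.simple i) * x * cs.simple i

/-- Iterated action `((x ⋉ s₁) ⋉ s₂) ⋉ ⋯ ⋉ sₖ` of a word on a twisted involution. -/
noncomputable def invWord (cs : CoxeterSystem M W) (σ : W → W) (x : W) (l : List B) : W :=
  l.foldl (invStep cs σ) x

/-- The involution words `R̂_*(x, y)` of `y` relative to `x`. -/
noncomputable def InvWords (cs : CoxeterSystem M W) (σ : W → W) (x y : W) : Set (List B) :=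
  {l | invWord cs σ x l = y ∧ ∀ l' : List B, invWord cs σ x l' = y → l.length ≤ l'.length}

/-- The set `R(w)` of reduced words of `w`. -/
def ReducedWords (cs : CoxeterSystem M W) (w : W) : Set (List B) :=
  {l | cs.wordProd l = w ∧ cs.IsReduced l}

/-- The Hecke atoms `B_*(x, y) = {w : x ⋉ w = y}`:  `x ⋉ w` is computed by applying any
reduced word of `w` letter by letter. -/
noncomputable def HeckeAtoms (cs : CoxeterSystem M W) (σ : W → W) (x y : W) : Set W :=
  {w | ∃ l : List B, cs.wordProd l = w ∧ cs.IsReduced l ∧ invWord cs σ x l = y}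

/-- The atoms `A_*(x, y)`: minimal-length elements of `B_*(x, y)`. -/
noncomputable def Atoms (cs : CoxeterSystem M W) (σ : W → W) (x y : W) : Set W :=
  {w ∈ HeckeAtoms cs σ x y | ∀ v ∈ HeckeAtoms cs σ x y, cs.length w ≤ cs.length v}

/-- The twisted involution length `ℓ̂_*(x)`: the common length of words in `R̂_*(1, x)`. -/
noncomputable def hatLength (cs : CoxeterSystem M W) (σ : W → W) (x : W) : ℕ :=
  sInf {k | ∃ l : List B, l.length = k ∧ invWord cs σ 1 l = x}

/-- The Bruhat order on `W`. -/
def BruhatLE (cs : CoxeterSystem M W) : W → W → Prop :=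
  Relation.ReflTransGen
    (fun a b => (∃ t, cs.IsReflection t ∧ b = a * t) ∧ cs.length a < cs.length b)


/-!
An atom `w` has a reduced word along which no letter is absorbed by the Demazure product
in `x ⋉ w`: a stalled letter could be deleted, giving a shorter element of `B_*(x, y)`.
Along such a word the length of `x w` grows by one per letter, because
`ℓ(s* x s) = ℓ(x) + 2` whenever `x < xs` and `s* x ≠ x s`. Appending letters one at a time,
`w* y ≤ x w` is then propagated by the lifting property of the Bruhat order
(`u ≤ v < vs` implies `us ≤ vs`), which holds because `v ↦ max(v, vs)` is monotone along
Bruhat covers. Both the length identity and the monotonicity rest on the reflection cocycle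
`η(w, t) ∈ ZMod 2`, read off the permutation representation of `W` on `W × ZMod 2`,
with `η(w, t) = 1` exactly when `ℓ(wt) < ℓ(w)` and `η(uv, t) = η(v, t) + η(u, v t v⁻¹)`.
-/

section ReflectionFlip

variable {G : Type*} [Group G]

noncomputable def reflectionFlip (t : G) : Equiv.Perm (G × ZMod 2) where
  toFun p := (t * p.1 * t⁻¹, p.2 + if p.1 = t then 1 else 0)
  invFun p := (t⁻¹ * p.1 * t, p.2 - if p.1 = t then 1 else 0)
  left_inv p := by
    have hconj : t * p.1 * t⁻¹ = t ↔ p.1 = t := by rw [mul_inv_eq_iff_eq_mul, mul_right_inj]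
    simp only [hconj, add_sub_cancel_right]
    ext <;> simp [mul_assoc]
  right_inv p := by
    have hconj : t⁻¹ * p.1 * t = t ↔ p.1 = t := by
      rw [mul_assoc, inv_mul_eq_iff_eq_mul, mul_left_inj]
    simp only [hconj, sub_add_cancel]
    ext <;> simp [mul_assoc]

theorem reflectionFlip_apply (t : G) (p : G × ZMod 2) :
    reflectionFlip t p = (t * p.1 * t⁻¹, p.2 + if p.1 = t then 1 else 0) := rfl

theorem pow_apply_eq_of_apply_eq {A : Type*} [AddCommMonoid A] {f : Equiv.Perm (G × A)} {r : G}
    {g : G → A} (hf : ∀ w e, f (w, e) = (r * w * r⁻¹, e + g w)) (k : ℕ) (w : G) (e : A) :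
    (f ^ k) (w, e) =
      (r ^ k * w * (r ^ k)⁻¹, e + ∑ j ∈ Finset.range k, g (r ^ j * w * (r ^ j)⁻¹)) := by
  induction k with
  | zero => simp
  | succ k ih =>
    rw [pow_succ', Equiv.Perm.mul_apply, ih, hf, Finset.sum_range_succ, pow_succ']
    simp only [Prod.mk.injEq, add_assoc, and_true]
    group

theorem reflectionFlip_mul_reflectionFlip_apply {a b : G} (hb : b⁻¹ = b) (w : G) (e : ZMod 2) :
    (reflectionFlip a * reflectionFlip b) (w, e) = (a * b * w * (a * b)⁻¹,
      e + ((if w = b then 1 else 0) + if w = b * (a * b) then 1 else 0)) := by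
  have hw : b * w * b⁻¹ = a ↔ w = b * (a * b) := by
    rw [← mul_assoc, show b * a * b = b⁻¹ * a * b by rw [hb]]
    exact ⟨fun h => by rw [← h]; group, fun h => by rw [h]; group⟩
  rw [Equiv.Perm.mul_apply, reflectionFlip_apply, reflectionFlip_apply]
  simp only [hw, add_assoc]
  ext <;> simp [mul_assoc]

/- Along `(a b)^m` the parity is toggled once at each `b (a b)^k`, `k < 2m`; since
`(a b)^m = 1`, every toggle occurs twice. -/
theorem reflectionFlip_mul_pow_eq_one {a b : G} {m : ℕ} (ha : a⁻¹ = a) (hb : b⁻¹ = b)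
    (hm : (a * b) ^ m = 1) : (reflectionFlip a * reflectionFlip b) ^ m = 1 := by
  set r := a * b with hr
  have hbr : b * r * b⁻¹ = r⁻¹ :=
    calc b * (a * b) * b⁻¹ = b * a := by group
      _ = r⁻¹ := by rw [hr, mul_inv_rev, ha, hb]
  have hconj (j : ℕ) : (r ^ j)⁻¹ * b = b * r ^ j := by
    have := map_pow (MulAut.conj b) r j
    simp only [MulAut.conj_apply, hbr, inv_pow] at this
    rw [← this]; group
  ext ⟨w, e⟩ : 1
  rw [pow_apply_eq_of_apply_eq (reflectionFlip_mul_reflectionFlip_apply hb), hm]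
  simp only [one_mul, inv_one, mul_one, Equiv.Perm.coe_one, id_eq, Prod.mk.injEq, true_and,
    add_eq_left]
  set δ : ℕ → ZMod 2 := fun k => if w = b * r ^ k then 1 else 0
  have hterm (j : ℕ) : ((if r ^ j * w * (r ^ j)⁻¹ = b then 1 else 0) +
      if r ^ j * w * (r ^ j)⁻¹ = b * r then 1 else 0) = δ (2 * j) + δ (2 * j + 1) := by
    have hmove (c : G) : r ^ j * w * (r ^ j)⁻¹ = c ↔ w = (r ^ j)⁻¹ * c * r ^ j :=
      ⟨fun h => by rw [← h]; group, fun h => by rw [h]; group⟩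
    have h0 : (r ^ j)⁻¹ * b * r ^ j = b * r ^ (2 * j) := by
      rw [hconj, mul_assoc, ← pow_add, two_mul]
    have h1 : (r ^ j)⁻¹ * (b * r) * r ^ j = b * r ^ (2 * j + 1) := by
      rw [← mul_assoc, hconj, mul_assoc, mul_assoc, ← pow_succ', ← pow_add]
      ring_nf
    simp only [hmove, h0, h1, δ]
  have hpair (n : ℕ) : ∑ j ∈ Finset.range n, (δ (2 * j) + δ (2 * j + 1)) =
      ∑ k ∈ Finset.range (n + n), δ k := by
    induction n with
    | zero => simp
    | succ n ih =>
      rw [Finset.sum_range_succ, ih, show n + 1 + (n + 1) = n + n + 1 + 1 by omega,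
        Finset.sum_range_succ, Finset.sum_range_succ, add_assoc, two_mul]
  have hperiodic (k : ℕ) : δ (m + k) = δ k := by simp only [δ, pow_add, hm, one_mul]
  rw [Finset.sum_congr rfl fun j _ => hterm j, hpair, Finset.sum_range_add]
  simp only [hperiodic, CharTwo.add_self_eq_zero]

end ReflectionFlip

namespace CoxeterSystem

variable (cs : CoxeterSystem M W)

local prefix:100 "s" => cs.simple
local prefix:100 "π" => cs.wordProd
local prefix:100 "ℓ" => cs.length

theorem isLiftable_reflectionFlip : M.IsLiftable fun i => reflectionFlip (s i) :=
  fun i i' => reflectionFlip_mul_pow_eq_one (cs.inv_simple i) (cs.inv_simple i')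
    (cs.simple_mul_simple_pow i i')

noncomputable def reflectionRep : W →* Equiv.Perm (W × ZMod 2) :=
  cs.lift ⟨_, cs.isLiftable_reflectionFlip⟩

noncomputable def reflectionCocycle (w t : W) : ZMod 2 := (cs.reflectionRep w (t, 0)).2

local notation "η" => cs.reflectionCocycle

theorem reflectionRep_simple (i : B) : cs.reflectionRep (s i) = reflectionFlip (s i) :=
  cs.lift_apply_simple cs.isLiftable_reflectionFlip i

theorem reflectionRep_apply (w : W) (p : W × ZMod 2) :
    cs.reflectionRep w p = (w * p.1 * w⁻¹, p.2 + η w p.1) := by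
  induction w using cs.simple_induction_left generalizing p with
  | one => simp [reflectionCocycle]
  | mul_simple_left w i ih =>
    have h (q : W × ZMod 2) : cs.reflectionRep (s i * w) q = (s i * w * q.1 * (s i * w)⁻¹,
        q.2 + (η w q.1 + if w * q.1 * w⁻¹ = s i then 1 else 0)) := by
      rw [map_mul, Equiv.Perm.mul_apply, ih, reflectionRep_simple, reflectionFlip_apply]
      simp [mul_assoc, add_assoc]
    conv_rhs => rw [reflectionCocycle, h, zero_add]
    exact h p

theorem reflectionCocycle_mul (u v t : W) : η (u * v) t = η v t + η u (v * t * v⁻¹) := by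
  rw [reflectionCocycle, map_mul, Equiv.Perm.mul_apply, reflectionRep_apply, reflectionRep_apply,
    zero_add]

theorem reflectionCocycle_one (t : W) : η 1 t = 0 := by simp [reflectionCocycle]

theorem reflectionCocycle_simple (i : B) (t : W) : η (s i) t = if t = s i then 1 else 0 := by
  simp [reflectionCocycle, reflectionRep_simple, reflectionFlip_apply]

theorem reflectionCocycle_self {t : W} (ht : cs.IsReflection t) : η t t = 1 := by
  obtain ⟨u, i, rfl⟩ := ht
  have hinv : η u⁻¹ (u * s i * u⁻¹) = η u (s i) := by
    have h := cs.reflectionCocycle_mul u u⁻¹ (u * s i * u⁻¹)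
    rwa [mul_inv_cancel, reflectionCocycle_one, inv_inv,
      show u⁻¹ * (u * s i * u⁻¹) * u = s i by group, eq_comm, CharTwo.add_eq_zero] at h
  have hs : s i * s i * (s i)⁻¹ = s i := by
    rw [cs.simple_mul_simple_self, one_mul, cs.inv_simple]
  rw [reflectionCocycle_mul, hinv, show u⁻¹ * (u * s i * u⁻¹) * u⁻¹⁻¹ = s i by group,
    reflectionCocycle_mul, hs, reflectionCocycle_simple, if_pos rfl, add_left_comm,
    CharTwo.add_self_eq_zero, add_zero]

theorem mem_rightInvSeq_of_reflectionCocycle_ne_zero {ω : List B} {t : W}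
    (h : η (π ω) t ≠ 0) : t ∈ cs.rightInvSeq ω := by
  induction ω with
  | nil => simp [reflectionCocycle_one] at h
  | cons i ω ih =>
    rw [wordProd_cons, reflectionCocycle_mul, reflectionCocycle_simple] at h
    rw [rightInvSeq, List.mem_cons]
    by_cases ht : π ω * t * (π ω)⁻¹ = s i
    · left; rw [← ht]; group
    · right; apply ih; simpa [ht] using h

theorem reflectionCocycle_eq_one_iff {w t : W} (ht : cs.IsReflection t) :
    η w t = 1 ↔ ℓ (w * t) < ℓ w := by
  have hdescent (u : W) (hu : η u t ≠ 0) : ℓ (u * t) < ℓ u := by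
    obtain ⟨ω, hω, rfl⟩ := cs.exists_isReduced u
    exact (cs.isRightInversion_of_mem_rightInvSeq hω
      (cs.mem_rightInvSeq_of_reflectionCocycle_ne_zero hu)).2
  have hsplit : η w t = 1 + η (w * t) t := by
    conv_lhs => rw [← mul_inv_cancel_right w t, ht.inv]
    rw [reflectionCocycle_mul, show t * t * t⁻¹ = t by group, cs.reflectionCocycle_self ht]
  refine ⟨fun h => hdescent w (by simp [h]), fun h => ?_⟩
  have h0 : η (w * t) t = 0 := by
    by_contra hne
    have := hdescent _ hne
    rw [mul_assoc, ht.mul_self, mul_one] at this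
    omega
  rw [hsplit, h0, add_zero]

theorem eq_simple_of_length_mul_mul_simple_lt {a t : W} {i : B} (ht : cs.IsReflection t)
    (h : ℓ a < ℓ (a * t)) (hlt : ℓ (a * t * s i) < ℓ (a * s i)) : t = s i := by
  set r := s i * t * s i with hr
  have hrefl : cs.IsReflection r := by simpa [cs.inv_simple] using ht.conj (s i)
  have h1 : η (a * s i) r = 1 :=
    (cs.reflectionCocycle_eq_one_iff hrefl).2 (by simpa [hr, mul_assoc] using hlt)
  have h0 : η a t ≠ 1 := fun h' => by
    have := (cs.reflectionCocycle_eq_one_iff ht).1 h'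
    omega
  rw [reflectionCocycle_mul, reflectionCocycle_simple,
    show s i * r * (s i)⁻¹ = t by simp [hr, mul_assoc, cs.inv_simple]] at h1
  split_ifs at h1 with hrs
  · calc t = s i * r * s i := by simp [hr, mul_assoc]
      _ = s i := by simp [hrs]
  · exact absurd (by simpa using h1) h0

theorem length_simple_mul_mul_simple {w : W} {i j : B} (hj : ℓ w < ℓ (s j * w))
    (hi : ℓ w < ℓ (w * s i)) (hne : s j * w ≠ w * s i) : ℓ (s j * w * s i) = ℓ w + 2 := by
  have hjw : ℓ (s j * w) = ℓ w + 1 := by rcases cs.length_simple_mul w j with h | h <;> omega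
  rcases cs.length_mul_simple (s j * w) i with h | h
  · omega
  have hconj : w * (w⁻¹ * s j * w) = s j * w := by group
  refine absurd ?_ hne
  have := cs.eq_simple_of_length_mul_mul_simple_lt (a := w) (t := w⁻¹ * s j * w) (i := i)
    (by simpa using (cs.isReflection_simple j).conj w⁻¹) (by rw [hconj]; exact hj)
    (by rw [hconj]; omega)
  rw [← hconj, this]

theorem bruhatLE_mul_of_isReflection {a t : W} (ht : cs.IsReflection t) (h : ℓ a < ℓ (a * t)) :
    BruhatLE cs a (a * t) :=
  .single ⟨⟨t, ht, rfl⟩, h⟩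

theorem bruhatLE_mul_simple {a : W} {i : B} (h : ℓ a < ℓ (a * s i)) : BruhatLE cs a (a * s i) :=
  cs.bruhatLE_mul_of_isReflection (cs.isReflection_simple i) h

theorem mul_simple_bruhatLE {a : W} {i : B} (h : ℓ (a * s i) < ℓ a) :
    BruhatLE cs (a * s i) a := by
  simpa using cs.bruhatLE_mul_simple (a := a * s i) (i := i) (by simpa using h)

noncomputable def demazureMulSimple (v : W) (i : B) : W :=
  if ℓ (v * s i) < ℓ v then v else v * s i

theorem bruhatLE_demazureMulSimple (v : W) (i : B) : BruhatLE cs v (cs.demazureMulSimple v i) := by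
  unfold demazureMulSimple
  split_ifs with h
  · exact .refl
  · exact cs.bruhatLE_mul_simple (lt_of_le_of_ne (not_lt.1 h) (cs.length_mul_simple_ne v i).symm)

theorem mul_simple_bruhatLE_demazureMulSimple (v : W) (i : B) :
    BruhatLE cs (v * s i) (cs.demazureMulSimple v i) := by
  unfold demazureMulSimple
  split_ifs with h
  · exact cs.mul_simple_bruhatLE h
  · exact .refl

theorem demazureMulSimple_bruhatLE_of_isReflection {a t : W} (i : B) (ht : cs.IsReflection t)
    (h : ℓ a < ℓ (a * t)) :
    BruhatLE cs (cs.demazureMulSimple a i) (cs.demazureMulSimple (a * t) i) := by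
  by_cases ha : ℓ (a * s i) < ℓ a
  · rw [demazureMulSimple, if_pos ha]
    exact (cs.bruhatLE_mul_of_isReflection ht h).trans (cs.bruhatLE_demazureMulSimple _ i)
  rw [demazureMulSimple, if_neg ha]
  have hrefl : cs.IsReflection (s i * t * s i) := by simpa [cs.inv_simple] using ht.conj (s i)
  have hconj : a * s i * (s i * t * s i) = a * t * s i := by simp [mul_assoc]
  rcases lt_or_gt_of_ne (hrefl.length_mul_left_ne (a * s i)) with hlt | hlt
  · rw [hconj] at hlt
    rw [← cs.eq_simple_of_length_mul_mul_simple_lt ht h hlt]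
    exact cs.bruhatLE_demazureMulSimple _ i
  · refine (cs.bruhatLE_mul_of_isReflection hrefl hlt).trans ?_
    rw [hconj]
    exact cs.mul_simple_bruhatLE_demazureMulSimple _ i

theorem _root_.BruhatLE.mul_simple_bruhatLE_demazureMulSimple {u v : W} (i : B)
    (h : BruhatLE cs u v) : BruhatLE cs (u * s i) (cs.demazureMulSimple v i) := by
  induction h with
  | refl => exact cs.mul_simple_bruhatLE_demazureMulSimple u i
  | tail _ hab ih =>
    obtain ⟨⟨t, ht, rfl⟩, hlt⟩ := hab
    exact ih.trans (cs.demazureMulSimple_bruhatLE_of_isReflection i ht hlt)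

theorem _root_.BruhatLE.mul_simple {u v : W} {i : B} (h : BruhatLE cs u v)
    (hv : ℓ v < ℓ (v * s i)) : BruhatLE cs (u * s i) (v * s i) := by
  simpa [demazureMulSimple, not_lt.2 hv.le] using h.mul_simple_bruhatLE_demazureMulSimple cs i

structure IsTwist (σ : W → W) : Prop where
  map_mul : ∀ u v : W, σ (u * v) = σ u * σ v
  involutive : ∀ w : W, σ (σ w) = w
  exists_simple : ∀ i : B, ∃ j : B, σ (s i) = s j

namespace IsTwist

variable {cs} {σ : W → W} (hσ : cs.IsTwist σ)
include hσ

theorem map_one : σ 1 = 1 := (MonoidHom.mk' σ hσ.map_mul).map_one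

theorem map_simple_mul_self (i : B) : σ (s i) * σ (s i) = 1 := by
  obtain ⟨j, hj⟩ := hσ.exists_simple i
  rw [hj, cs.simple_mul_simple_self]

theorem length_map (w : W) : ℓ (σ w) = ℓ w := by
  have hword (ω : List B) : ℓ (σ (π ω)) ≤ ω.length := by
    induction ω with
    | nil => simp [hσ.map_one]
    | cons i ω ih =>
      obtain ⟨j, hj⟩ := hσ.exists_simple i
      rw [wordProd_cons, hσ.map_mul, hj, List.length_cons]
      linarith [cs.length_mul_le (s j) (σ (π ω)), cs.length_simple j]
  have hle (u : W) : ℓ (σ u) ≤ ℓ u := by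
    obtain ⟨ω, hω, rfl⟩ := cs.exists_isReduced u
    exact hω.eq ▸ hword ω
  exact le_antisymm (hle w) (by simpa [hσ.involutive] using hle (σ w))

theorem length_map_simple_mul {x : W} (hx : x⁻¹ = σ x) (i : B) :
    ℓ (σ (s i) * x) = ℓ (x * s i) :=
  calc ℓ (σ (s i) * x) = ℓ (σ (σ (s i) * x)) := (hσ.length_map _).symm
    _ = ℓ ((x * s i)⁻¹) := by
      rw [hσ.map_mul, hσ.involutive, ← hx, mul_inv_rev, cs.inv_simple]
    _ = ℓ (x * s i) := cs.length_inv _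

theorem length_map_simple_mul_mul_simple {x : W} (hx : x⁻¹ = σ x) {i : B}
    (hi : ℓ x < ℓ (x * s i)) (hne : σ (s i) * x ≠ x * s i) :
    ℓ (σ (s i) * x * s i) = ℓ x + 2 := by
  obtain ⟨j, hj⟩ := hσ.exists_simple i
  rw [hj] at hne ⊢
  exact cs.length_simple_mul_mul_simple (by rwa [← hj, hσ.length_map_simple_mul hx]) hi hne

end IsTwist

section TwistedAction

variable {σ : W → W} {x : W} {i : B}

theorem invStep_of_lt (h : ℓ (x * s i) < ℓ x) : invStep cs σ x i = x := if_pos h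

theorem invStep_of_eq (h : ℓ x < ℓ (x * s i)) (heq : σ (s i) * x = x * s i) :
    invStep cs σ x i = x * s i := by
  rw [invStep, if_neg (not_lt.2 h.le), if_pos heq]

theorem invStep_of_ne (h : ℓ x < ℓ (x * s i)) (hne : σ (s i) * x ≠ x * s i) :
    invStep cs σ x i = σ (s i) * x * s i := by
  rw [invStep, if_neg (not_lt.2 h.le), if_neg hne]

@[simp] theorem invWord_nil : invWord cs σ x [] = x := rfl

@[simp] theorem invWord_cons (l : List B) :
    invWord cs σ x (i :: l) = invWord cs σ (invStep cs σ x i) l := rfl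

theorem invWord_append (l₁ l₂ : List B) :
    invWord cs σ x (l₁ ++ l₂) = invWord cs σ (invWord cs σ x l₁) l₂ := List.foldl_append

variable (σ) in
/-- No letter of the word is absorbed by the Demazure product: each one acts at an ascent. -/
def IsAscentWord : W → List B → Prop
  | _, [] => True
  | x, i :: l => ℓ x < ℓ (x * s i) ∧ IsAscentWord (invStep cs σ x i) l

theorem isAscentWord_append {l₁ l₂ : List B} : cs.IsAscentWord σ x (l₁ ++ l₂) ↔
    cs.IsAscentWord σ x l₁ ∧ cs.IsAscentWord σ (invWord cs σ x l₁) l₂ := by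
  induction l₁ generalizing x with
  | nil => simp [IsAscentWord]
  | cons i l₁ ih => simp only [List.cons_append, IsAscentWord, ih, invWord_cons, and_assoc]

theorem exists_length_add_one_eq_of_not_isAscentWord {l : List B}
    (h : ¬ cs.IsAscentWord σ x l) :
    ∃ m : List B, m.length + 1 = l.length ∧ invWord cs σ x m = invWord cs σ x l := by
  induction l generalizing x with
  | nil => exact absurd trivial h
  | cons i l ih =>
    by_cases hi : ℓ x < ℓ (x * s i)
    · obtain ⟨m, hm, hinv⟩ := ih fun hl => h ⟨hi, hl⟩
      exact ⟨i :: m, by simp [hm], hinv⟩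
    · have hdesc : ℓ (x * s i) < ℓ x :=
        lt_of_le_of_ne (not_lt.1 hi) (cs.length_mul_simple_ne x i)
      exact ⟨l, rfl, by rw [invWord_cons, invStep_of_lt cs hdesc]⟩

end TwistedAction

namespace IsTwist

variable {cs} {σ : W → W} (hσ : cs.IsTwist σ) {x : W}
include hσ

theorem invStep_inv (hx : x⁻¹ = σ x) (i : B) :
    (invStep cs σ x i)⁻¹ = σ (invStep cs σ x i) := by
  have hσs : σ (s i) = (σ (s i))⁻¹ := eq_inv_of_mul_eq_one_left (hσ.map_simple_mul_self i)
  rcases lt_or_gt_of_ne (cs.length_mul_simple_ne x i) with hdesc | hasc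
  · rwa [invStep_of_lt cs hdesc]
  by_cases heq : σ (s i) * x = x * s i
  · rw [invStep_of_eq cs hasc heq, mul_inv_rev, cs.inv_simple, hσ.map_mul, ← hx]
    calc s i * x⁻¹ = x⁻¹ * (x * s i) * x⁻¹ := by group
      _ = x⁻¹ * σ (s i) := by rw [← heq]; group
  · rw [invStep_of_ne cs hasc heq, hσ.map_mul, hσ.map_mul, hσ.involutive, ← hx, mul_inv_rev,
      mul_inv_rev, cs.inv_simple, ← hσs, mul_assoc]

theorem length_mul_wordProd (hx : x⁻¹ = σ x) {l : List B} (h : cs.IsAscentWord σ x l) :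
    ℓ (x * π l) = ℓ x + l.length := by
  induction l generalizing x with
  | nil => simp
  | cons i l ih =>
    obtain ⟨hi, hl⟩ := h
    have hstep := ih (hσ.invStep_inv hx i) hl
    have hxi : ℓ (x * s i) = ℓ x + 1 := by rcases cs.length_mul_simple x i with h | h <;> omega
    have hupper : ℓ (x * s i * π l) ≤ ℓ x + 1 + l.length := by
      linarith [cs.length_mul_le (x * s i) (π l), cs.length_wordProd_le l]
    rw [wordProd_cons, ← mul_assoc, List.length_cons]
    by_cases heq : σ (s i) * x = x * s i
    · rw [invStep_of_eq cs hi heq, hxi] at hstep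
      omega
    · rw [invStep_of_ne cs hi heq, hσ.length_map_simple_mul_mul_simple hx hi heq] at hstep
      obtain ⟨j, hj⟩ := hσ.exists_simple i
      have hlower := cs.length_mul_le (σ (s i)) (x * s i * π l)
      rw [← mul_assoc, ← mul_assoc, hstep, hj, cs.length_simple] at hlower
      omega

theorem isReduced_of_isAscentWord (hx : x⁻¹ = σ x) {l : List B}
    (h : cs.IsAscentWord σ x l) : cs.IsReduced l := by
  have hadd := hσ.length_mul_wordProd hx h
  have := cs.length_mul_le x (π l)
  exact le_antisymm (cs.length_wordProd_le l) (by omega)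

theorem exists_mem_heckeAtoms_length_le (hx : x⁻¹ = σ x) (l : List B) :
    ∃ v ∈ HeckeAtoms cs σ x (invWord cs σ x l), ℓ v ≤ l.length := by
  induction hn : l.length using Nat.strong_induction_on generalizing l with
  | _ n ih =>
    by_cases h : cs.IsAscentWord σ x l
    · exact ⟨π l, ⟨l, rfl, hσ.isReduced_of_isAscentWord hx h, rfl⟩,
        hn ▸ cs.length_wordProd_le l⟩
    · obtain ⟨m, hm, hinv⟩ := cs.exists_length_add_one_eq_of_not_isAscentWord h
      obtain ⟨v, hv, hlen⟩ := ih m.length (by omega) m rfl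
      exact ⟨v, hinv ▸ hv, by omega⟩

theorem isAscentWord_of_minimal (hx : x⁻¹ = σ x) {l : List B} (hl : cs.IsReduced l)
    (hmin : ∀ v ∈ HeckeAtoms cs σ x (invWord cs σ x l), ℓ (π l) ≤ ℓ v) :
    cs.IsAscentWord σ x l := by
  by_contra h
  obtain ⟨m, hm, hinv⟩ := cs.exists_length_add_one_eq_of_not_isAscentWord h
  obtain ⟨v, hv, hlen⟩ := hσ.exists_mem_heckeAtoms_length_le hx m
  have := hmin v (hinv ▸ hv)
  rw [hl.eq] at this
  omega

theorem bruhatLE_of_isAscentWord (hx : x⁻¹ = σ x) {l : List B} (h : cs.IsAscentWord σ x l) :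
    BruhatLE cs (σ (π l) * invWord cs σ x l) (x * π l) := by
  induction l using List.reverseRecOn with
  | nil => simpa [hσ.map_one] using .refl
  | append_singleton l i ih =>
    have hlen := hσ.length_mul_wordProd hx h
    obtain ⟨hl, hi, -⟩ := (cs.isAscentWord_append).1 h
    have hasc : ℓ (x * π l) < ℓ (x * π l * s i) := by
      rw [wordProd_append, wordProd_singleton, ← mul_assoc, List.length_append] at hlen
      rw [hlen, hσ.length_mul_wordProd hx hl, List.length_singleton]
      omega
    set y := invWord cs σ x l
    rw [invWord_append, invWord_cons, invWord_nil, wordProd_append, wordProd_singleton,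
      hσ.map_mul, ← mul_assoc x]
    by_cases heq : σ (s i) * y = y * s i
    · rw [invStep_of_eq cs hi heq, mul_assoc, ← mul_assoc (σ (s i)), heq, mul_assoc,
        cs.simple_mul_simple_self, mul_one]
      exact (ih hl).trans (cs.bruhatLE_mul_simple hasc)
    · rw [invStep_of_ne cs hi heq, mul_assoc, ← mul_assoc (σ (s i)), ← mul_assoc (σ (s i)),
        hσ.map_simple_mul_self, one_mul, ← mul_assoc]
      exact (ih hl).mul_simple cs hasc

end IsTwist

end CoxeterSystem

theorem atoms_subset_bruhat_general
    (cs : CoxeterSystem M W) (σ : W → W)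
    (hmul : ∀ u v : W, σ (u * v) = σ u * σ v)
    (hinvol : ∀ w : W, σ (σ w) = w)
    (hgen : ∀ i : B, ∃ j : B, σ (cs.simple i) = cs.simple j)
    (x y : W) (hx : x⁻¹ = σ x) :
    Atoms cs σ x y ⊆ {w : W | BruhatLE cs (σ w * y) (x * w)} := by
  have hσ : cs.IsTwist σ := ⟨hmul, hinvol, hgen⟩
  rintro _ ⟨⟨l, rfl, hl, rfl⟩, hmin⟩
  exact hσ.bruhatLE_of_isAscentWord hx (hσ.isAscentWord_of_minimal hx hl hmin)

/-- Every atom `w ∈ A_*(x, y)` satisfies `w* y ≤ x w` in Bruhat order. -/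
theorem atoms_subset_bruhat
    (cs : CoxeterSystem M W) (σ : W → W)
    (hmul : ∀ u v : W, σ (u * v) = σ u * σ v)
    (hinvol : ∀ w : W, σ (σ w) = w)
    (hgen : ∀ i : B, ∃ j : B, σ (cs.simple i) = cs.simple j)
    (x y : W) (hx : x⁻¹ = σ x) (hy : y⁻¹ = σ y) :
    Atoms cs σ x y ⊆ {w : W | BruhatLE cs (σ w * y) (x * w)} :=
  atoms_subset_bruhat_general cs σ hmul hinvol hgen x y hx
end

section
/- Let (W,S,*) be a twisted Coxeter system with W finite and longest element w₀. Then B_*(1, w₀) = {w ∈ W : w* w₀ ≤ w}, where ≤ is the Bruhat order; that is, the set of Hecke atoms of w₀ consists exactly of the elements w ∈ W with w* w₀ ≤ w. -/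
open CoxeterSystem
open scoped Classical

variable {B W : Type*} [Group W] {M : CoxeterMatrix B}

/-!
The proof describes `x ⋉ w` as a Bruhat maximum: for a reduced word of `w`, `x ⋉ w` is the
largest element of `{(a*)⁻¹ x b : a, b ≤ w}` and belongs to that set. On twisted involutions each
step `x ⋉ sᵢ` is the Demazure product `sᵢ* ∘ x ∘ sᵢ`, so this follows from the lifting property:
`u ↦ max(u, s u)` and `u ↦ min(u, s u)` are monotone for the Bruhat order. The lifting property
in turn comes from Humphreys' parity cocycle `η(w, t)`, which decides whether `t` is an inversion
of `w` without any exchange condition.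

For `x = 1`: if `w₀ = (a*)⁻¹ b` with `a, b ≤ w`, then `w* w₀ ≤ a* w₀ = b ≤ w` because right
multiplication by `w₀` reverses the Bruhat order. Conversely, if `w* w₀ ≤ w`, then `a = w` and
`b = w* w₀` give `w₀ ≤ 1 ⋉ w`, so `1 ⋉ w = w₀`.
-/

namespace CoxeterSystem

variable (cs : CoxeterSystem M W)

local prefix:100 "s " => cs.simple
local prefix:100 "π " => cs.wordProd
local prefix:100 "ℓ " => cs.length

theorem reverse_alternatingWord_two_mul (i j : B) (p : ℕ) :
    (alternatingWord i j (2 * p)).reverse = alternatingWord j i (2 * p) := by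
  apply List.ext_getElem (by simp)
  intro k hk _
  simp only [List.length_reverse, length_alternatingWord] at hk
  rw [List.getElem_reverse, getElem_alternatingWord _ _ _ _ (by simp; omega),
    getElem_alternatingWord _ _ _ _ hk]
  simp only [length_alternatingWord, Nat.even_iff]
  split_ifs <;> first | rfl | omega

/-- The inversion sequence of `(i j)ᵖ` has period `p` when `(sᵢ sⱼ)ᵖ = 1`. -/
theorem even_count_rightInvSeq_alternatingWord {i j : B} {p : ℕ} (hp : (s i * s j) ^ p = 1)
    (t : W) : Even ((cs.rightInvSeq (alternatingWord i j (2 * p))).count t) := by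
  rw [← reverse_alternatingWord_two_mul, rightInvSeq_reverse, List.count_reverse]
  set L := cs.leftInvSeq (alternatingWord j i (2 * p)) with hL
  have hlen : L.length = 2 * p := by simp [hL]
  have hperiod : L.drop p = L.take p := by
    apply List.ext_getElem (by simp [hlen]; omega)
    intro k h₁ h₂
    simp only [List.length_take, hlen] at h₂
    simp only [List.getElem_drop, List.getElem_take, hL]
    rw [getElem_leftInvSeq_alternatingWord cs j i p (p + k) (by omega),
      getElem_leftInvSeq_alternatingWord cs j i p k (by omega),
      prod_alternatingWord_eq_mul_pow, prod_alternatingWord_eq_mul_pow,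
      if_neg (by simp), if_neg (by simp), show (2 * (p + k) + 1) / 2 = p + k by omega,
      show (2 * k + 1) / 2 = k by omega, pow_add, hp, one_mul]
  rw [← List.take_append_drop p L, List.count_append, hperiod]
  exact ⟨_, rfl⟩

/-- Humphreys' action (§5.7) of `sᵢ` on `T × {±1}`, here on all of `W × ZMod 2`. -/
noncomputable def parityPerm (i : B) : Equiv.Perm (W × ZMod 2) :=
  Function.Involutive.toPerm (fun p => (s i * p.1 * s i, p.2 + if p.1 = s i then 1 else 0)) <| by
    rintro ⟨t, z⟩
    have hconj : s i * (s i * t * s i) * s i = t := by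
      simp [mul_assoc, simple_mul_simple_cancel_left]
    have hcond : s i * t * s i = s i ↔ t = s i := by
      constructor
      · intro h; rw [← hconj, h]; simp
      · rintro rfl; simp
    simp only [hconj, hcond, Prod.mk.injEq, true_and, add_assoc]
    split_ifs
    · rw [show (1 : ZMod 2) + 1 = 0 by decide, add_zero]
    · rw [add_zero, add_zero]

theorem parityPerm_apply (i : B) (t : W) (z : ZMod 2) :
    cs.parityPerm i (t, z) = (s i * t * s i, z + if t = s i then 1 else 0) :=
  rfl

theorem prod_map_parityPerm_apply (ω : List B) (t : W) (z : ZMod 2) :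
    (ω.map cs.parityPerm).prod (t, z) =
      (π ω * t * (π ω)⁻¹, z + ((cs.rightInvSeq ω).count t : ZMod 2)) := by
  induction ω generalizing t z with
  | nil => simp
  | cons i ω ih =>
    have hcond : π ω * t * (π ω)⁻¹ = s i ↔ (π ω)⁻¹ * s i * π ω = t := by
      constructor <;> intro h <;> rw [← h] <;> group
    simp only [List.map_cons, List.prod_cons, Equiv.Perm.mul_apply, ih, rightInvSeq,
      List.count_cons, beq_iff_eq, wordProd_cons, parityPerm_apply, hcond, mul_inv_rev,
      inv_simple, Prod.mk.injEq]
    refine ⟨by group, ?_⟩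
    split_ifs <;> push_cast <;> ring

theorem isLiftable_parityPerm : M.IsLiftable cs.parityPerm := by
  intro i j
  have hword : (cs.parityPerm i * cs.parityPerm j) ^ M i j =
      ((alternatingWord i j (2 * M i j)).map cs.parityPerm).prod := by
    induction M i j with
    | zero => simp [alternatingWord]
    | succ p ih =>
      rw [show 2 * (p + 1) = 2 * p + 1 + 1 by ring, alternatingWord_succ', alternatingWord_succ',
        if_neg (by simp), if_pos (by simp), List.map_cons, List.map_cons, List.prod_cons,
        List.prod_cons, ← ih, pow_succ', mul_assoc]
  have hprod : π (alternatingWord i j (2 * M i j)) = 1 := by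
    rw [prod_alternatingWord_eq_mul_pow, if_pos (by simp), Nat.mul_div_cancel_left _ two_pos,
      one_mul, simple_mul_simple_pow]
  ext ⟨t, z⟩ : 1
  rw [hword, prod_map_parityPerm_apply, hprod,
    (cs.even_count_rightInvSeq_alternatingWord (cs.simple_mul_simple_pow i j) t).natCast_zmod_two]
  simp

noncomputable def parityRep : W →* Equiv.Perm (W × ZMod 2) :=
  cs.lift ⟨cs.parityPerm, cs.isLiftable_parityPerm⟩

theorem parityRep_wordProd (ω : List B) :
    cs.parityRep (π ω) = (ω.map cs.parityPerm).prod := by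
  rw [wordProd, map_list_prod, List.map_map]
  congr 1
  exact List.map_congr_left fun i _ => cs.lift_apply_simple cs.isLiftable_parityPerm i

/-- Humphreys' `η(w, t)` (§5.7), written additively. -/
noncomputable def inversionParity (w t : W) : ZMod 2 := (cs.parityRep w (t, 0)).2

theorem parityRep_apply (w t : W) (z : ZMod 2) :
    cs.parityRep w (t, z) = (w * t * w⁻¹, z + cs.inversionParity w t) := by
  obtain ⟨ω, rfl⟩ := cs.wordProd_surjective w
  simp [inversionParity, parityRep_wordProd, prod_map_parityPerm_apply]

theorem inversionParity_wordProd (ω : List B) (t : W) :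
    cs.inversionParity (π ω) t = (cs.rightInvSeq ω).count t := by
  simp [inversionParity, parityRep_wordProd, prod_map_parityPerm_apply]

theorem inversionParity_mul (a b t : W) :
    cs.inversionParity (a * b) t = cs.inversionParity b t + cs.inversionParity a (b * t * b⁻¹) := by
  have h := congrArg Prod.snd <| show cs.parityRep (a * b) (t, 0) =
    cs.parityRep a (cs.parityRep b (t, 0)) by rw [map_mul]; rfl
  simpa only [parityRep_apply, zero_add] using h

theorem inversionParity_simple (i : B) (t : W) :
    cs.inversionParity (s i) t = if t = s i then 1 else 0 := by
  rw [inversionParity, parityRep, lift_apply_simple, parityPerm_apply, zero_add]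

theorem inversionParity_one (t : W) : cs.inversionParity 1 t = 0 := by
  simp [inversionParity]

variable {cs} in
theorem IsReflection.inversionParity_self {t : W} (ht : cs.IsReflection t) :
    cs.inversionParity t t = 1 := by
  obtain ⟨w, i, rfl⟩ := ht
  have h₁ := cs.inversionParity_mul w w⁻¹ (w * s i * w⁻¹)
  have h₂ := cs.inversionParity_mul (w * s i) w⁻¹ (w * s i * w⁻¹)
  have h₃ := cs.inversionParity_mul w (s i) (s i)
  simp only [mul_inv_cancel, inv_inv, inversionParity_one, inversionParity_simple,
    show w⁻¹ * (w * s i * w⁻¹) * w = s i by group, simple_mul_simple_self, one_mul, inv_simple,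
    ↓reduceIte] at h₁ h₂ h₃
  rw [h₂, h₃]
  linear_combination -h₁

theorem inversionParity_eq_zero_of_length_lt {w t : W} (h : ℓ w < ℓ (w * t)) :
    cs.inversionParity w t = 0 := by
  obtain ⟨ω, hω, rfl⟩ := cs.exists_isReduced w
  rw [inversionParity_wordProd, List.count_eq_zero.mpr, Nat.cast_zero]
  exact fun hmem => (cs.isRightInversion_of_mem_rightInvSeq hω hmem).2.not_gt h

theorem inversionParity_eq_one_iff {w t : W} (ht : cs.IsReflection t) :
    cs.inversionParity w t = 1 ↔ cs.IsRightInversion w t := by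
  rcases lt_or_gt_of_ne (ht.length_mul_left_ne w) with h | h
  · have hw : w * t * t = w := by rw [mul_assoc, ht.mul_self, mul_one]
    rw [← hw, inversionParity_mul, ht.inversionParity_self, show t * t * t⁻¹ = t by
      rw [ht.mul_self, one_mul, ht.inv], inversionParity_eq_zero_of_length_lt cs (by rwa [hw]),
      add_zero, hw]
    exact iff_of_true rfl ⟨ht, h⟩
  · rw [inversionParity_eq_zero_of_length_lt cs h]
    exact iff_of_false zero_ne_one fun hinv => hinv.2.not_gt h

variable {cs} in
theorem IsRightInversion.simple_mul_or {z t : W} (h : cs.IsRightInversion z t) (i : B) :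
    cs.IsRightInversion (s i * z) t ∨ s i * z = z * t := by
  have ht := h.1
  rw [← inversionParity_eq_one_iff cs ht] at h ⊢
  rw [← simple_mul_simple_cancel_left cs (w := z) i, inversionParity_mul] at h
  rcases (by decide : ∀ a : ZMod 2, a = 0 ∨ a = 1) (cs.inversionParity (s i * z) t) with h0 | h1
  · rw [h0, zero_add, inversionParity_simple, ite_eq_left_iff] at h
    right
    have hc : s i * z * t * (s i * z)⁻¹ = s i := by_contra fun hc => zero_ne_one (h hc)
    calc s i * z = s i * z * t * (s i * z)⁻¹ * (s i * z) * t := by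
          rw [inv_mul_cancel_right, mul_assoc, ht.mul_self, mul_one]
      _ = z * t := by rw [hc, ← mul_assoc, simple_mul_simple_self, one_mul]
  · exact Or.inl h1

theorem simple_mul_eq_mul_simple_of_isLeftDescent_mul_simple {x : W} {i j : B}
    (hj : ¬cs.IsLeftDescent x j) (hi : ¬cs.IsRightDescent x i)
    (h : cs.IsLeftDescent (x * s i) j) : s j * x = x * s i := by
  rw [not_isLeftDescent_iff] at hj
  rw [not_isRightDescent_iff] at hi
  have hinv : cs.IsRightInversion (s j * x) (s i) :=
    ⟨cs.isReflection_simple i, by unfold IsLeftDescent at h; rw [mul_assoc]; omega⟩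
  rcases hinv.simple_mul_or j with h' | h'
  · rw [simple_mul_simple_cancel_left] at h'
    exact absurd h'.2 (by omega)
  · rw [simple_mul_simple_cancel_left] at h'
    calc s j * x = s j * x * s i * s i := (simple_mul_simple_cancel_right cs i).symm
      _ = x * s i := by rw [← h']

variable {cs}

@[refl]
theorem _root_.BruhatLE.refl (u : W) : BruhatLE cs u u :=
  Relation.ReflTransGen.refl

theorem _root_.BruhatLE.length_le {u w : W} (h : BruhatLE cs u w) : ℓ u ≤ ℓ w := by
  induction h with
  | refl => rfl
  | tail _ hstep ih => exact ih.trans hstep.2.le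

theorem _root_.BruhatLE.antisymm {u w : W} (h₁ : BruhatLE cs u w) (h₂ : BruhatLE cs w u) :
    u = w := by
  rcases h₁.cases_tail with rfl | ⟨b, hub, hbw⟩
  · rfl
  · exact absurd (h₂.length_le.trans (BruhatLE.length_le hub)) hbw.2.not_ge

theorem bruhatLE_mul_reflection {u t : W} (ht : cs.IsReflection t) (h : ℓ u < ℓ (u * t)) :
    BruhatLE cs u (u * t) :=
  .single ⟨⟨t, ht, rfl⟩, h⟩

theorem mul_reflection_bruhatLE {u t : W} (ht : cs.IsReflection t) (h : ℓ (u * t) < ℓ u) :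
    BruhatLE cs (u * t) u := by
  have hu : u * t * t = u := by rw [mul_assoc, ht.mul_self, mul_one]
  simpa only [hu] using bruhatLE_mul_reflection ht (u := u * t) (by rwa [hu])

theorem bruhatLE_simple_mul {u : W} {i : B} (h : ¬cs.IsLeftDescent u i) :
    BruhatLE cs u (s i * u) := by
  have hu : s i * u = u * (u⁻¹ * s i * u) := by group
  rw [hu]
  refine bruhatLE_mul_reflection (by simpa using (cs.isReflection_simple i).conj u⁻¹) ?_
  rw [← hu]
  exact lt_of_le_of_ne (not_lt.mp h) (cs.length_simple_mul_ne u i).symm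

theorem simple_mul_bruhatLE {u : W} {i : B} (h : cs.IsLeftDescent u i) :
    BruhatLE cs (s i * u) u := by
  simpa only [simple_mul_simple_cancel_left] using
    bruhatLE_simple_mul (u := s i * u) ((isLeftDescent_iff_not_isLeftDescent_mul cs).mp h)

theorem _root_.BruhatLE.inv {u w : W} (h : BruhatLE cs u w) : BruhatLE cs u⁻¹ w⁻¹ := by
  induction h with
  | refl => rfl
  | @tail b c _ hstep ih =>
    obtain ⟨⟨t, ht, rfl⟩, hlt⟩ := hstep
    have hbt : (b * t)⁻¹ = b⁻¹ * (b * t * b⁻¹) := by rw [mul_inv_rev, ht.inv]; group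
    refine ih.trans ?_
    rw [hbt]
    exact bruhatLE_mul_reflection (ht.conj b) (by rwa [← hbt, length_inv, length_inv])

theorem bruhatLE_mul_of_length_mul {w u : W} (h : ℓ (w * u) = ℓ w + ℓ u) :
    BruhatLE cs w (w * u) := by
  obtain ⟨n, hn⟩ : ∃ n, ℓ u = n := ⟨_, rfl⟩
  induction n generalizing u with
  | zero => rw [cs.length_eq_zero_iff.mp hn, mul_one]
  | succ n ih =>
    obtain ⟨i, hi⟩ := cs.exists_rightDescent_of_ne_one (w := u) fun hu => by simp [hu] at hn
    rw [isRightDescent_iff] at hi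
    have hwu := cs.length_mul_simple (w * u) i
    have hle : ℓ (w * u * s i) ≤ ℓ w + ℓ (u * s i) := by
      simpa only [mul_assoc] using cs.length_mul_le w (u * s i)
    have hprefix := ih (u := u * s i) (by rw [← mul_assoc]; omega) (by omega)
    rw [← simple_mul_simple_cancel_right cs (w := u) i, ← mul_assoc]
    refine hprefix.trans (bruhatLE_mul_reflection (cs.isReflection_simple i) ?_)
    rw [← mul_assoc, simple_mul_simple_cancel_right]
    omega

variable (cs)

-- `maxSimpleMul i w = sᵢ ∘ w` and `maxMulSimple w i = w ∘ sᵢ` for the Demazure product `∘`.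
noncomputable def maxSimpleMul (i : B) (w : W) : W :=
  if cs.IsLeftDescent w i then w else s i * w

noncomputable def minSimpleMul (i : B) (w : W) : W :=
  if cs.IsLeftDescent w i then s i * w else w

noncomputable def maxMulSimple (w : W) (i : B) : W :=
  if cs.IsRightDescent w i then w else w * s i

noncomputable def minMulSimple (w : W) (i : B) : W :=
  if cs.IsRightDescent w i then w * s i else w

variable {cs}

/-- The reflection `t` stays an inversion of `sᵢ (v t)` unless `sᵢ (v t) = v`. -/
theorem bruhatLE_of_isLeftDescent_mul_reflection {v t : W} {i : B} (ht : cs.IsReflection t)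
    (hvt : ℓ v < ℓ (v * t)) (hz : cs.IsLeftDescent (v * t) i) (hv : ¬cs.IsLeftDescent v i) :
    BruhatLE cs (s i * v) (v * t) ∧ BruhatLE cs v (s i * (v * t)) := by
  have hzt : v * t * t = v := by rw [mul_assoc, ht.mul_self, mul_one]
  rcases IsRightInversion.simple_mul_or ⟨ht, by rwa [hzt]⟩ i with h | h
  · have hsv : BruhatLE cs (s i * v) (s i * (v * t)) := by
      have := mul_reflection_bruhatLE ht h.2
      rwa [mul_assoc, hzt] at this
    exact ⟨hsv.trans (simple_mul_bruhatLE hz), (bruhatLE_simple_mul hv).trans hsv⟩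
  · rw [hzt] at h
    have hsv : s i * v = v * t := by rw [← simple_mul_simple_cancel_left cs (w := v * t) i, h]
    rw [hsv, h]
    exact ⟨BruhatLE.refl _, BruhatLE.refl _⟩

theorem bruhatLE_maxSimpleMul_minSimpleMul_of_mul_reflection {v t : W} (ht : cs.IsReflection t)
    (hvt : ℓ v < ℓ (v * t)) (i : B) :
    BruhatLE cs (cs.maxSimpleMul i v) (cs.maxSimpleMul i (v * t)) ∧
      BruhatLE cs (cs.minSimpleMul i v) (cs.minSimpleMul i (v * t)) := by
  have hstep := bruhatLE_mul_reflection ht hvt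
  have hshift (h : ℓ (s i * v) < ℓ (s i * (v * t))) : BruhatLE cs (s i * v) (s i * (v * t)) := by
    rw [← mul_assoc] at h ⊢
    exact bruhatLE_mul_reflection ht h
  unfold maxSimpleMul minSimpleMul
  by_cases hv : cs.IsLeftDescent v i <;> by_cases hz : cs.IsLeftDescent (v * t) i <;>
    simp only [hv, hz, if_true, if_false]
  · rw [isLeftDescent_iff] at hv hz
    exact ⟨hstep, hshift (by omega)⟩
  · exact ⟨hstep.trans (bruhatLE_simple_mul hz), (simple_mul_bruhatLE hv).trans hstep⟩
  · exact bruhatLE_of_isLeftDescent_mul_reflection ht hvt hz hv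
  · rw [not_isLeftDescent_iff] at hv hz
    exact ⟨hshift (by omega), hstep⟩

theorem _root_.BruhatLE.maxSimpleMul_minSimpleMul {u w : W} (h : BruhatLE cs u w) (i : B) :
    BruhatLE cs (cs.maxSimpleMul i u) (cs.maxSimpleMul i w) ∧
      BruhatLE cs (cs.minSimpleMul i u) (cs.minSimpleMul i w) := by
  induction h with
  | refl => exact ⟨BruhatLE.refl _, BruhatLE.refl _⟩
  | tail _ hstep ih =>
    obtain ⟨⟨t, ht, rfl⟩, hlt⟩ := hstep
    have := bruhatLE_maxSimpleMul_minSimpleMul_of_mul_reflection ht hlt i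
    exact ⟨ih.1.trans this.1, ih.2.trans this.2⟩

theorem inv_maxSimpleMul_inv (w : W) (i : B) :
    (cs.maxSimpleMul i w⁻¹)⁻¹ = cs.maxMulSimple w i := by
  unfold maxSimpleMul maxMulSimple
  rw [← isRightDescent_inv_iff, inv_inv]
  split_ifs <;> simp

theorem inv_minSimpleMul_inv (w : W) (i : B) :
    (cs.minSimpleMul i w⁻¹)⁻¹ = cs.minMulSimple w i := by
  unfold minSimpleMul minMulSimple
  rw [← isRightDescent_inv_iff, inv_inv]
  split_ifs <;> simp

theorem _root_.BruhatLE.maxMulSimple_minMulSimple {u w : W} (h : BruhatLE cs u w) (i : B) :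
    BruhatLE cs (cs.maxMulSimple u i) (cs.maxMulSimple w i) ∧
      BruhatLE cs (cs.minMulSimple u i) (cs.minMulSimple w i) := by
  simp only [← inv_maxSimpleMul_inv, ← inv_minSimpleMul_inv]
  have := h.inv.maxSimpleMul_minSimpleMul i
  exact ⟨this.1.inv, this.2.inv⟩

theorem _root_.BruhatLE.bruhatLE_maxSimpleMul {u w : W} (h : BruhatLE cs u w) (i : B) :
    BruhatLE cs u (cs.maxSimpleMul i w) ∧ BruhatLE cs (s i * u) (cs.maxSimpleMul i w) := by
  refine ⟨.trans ?_ (h.maxSimpleMul_minSimpleMul i).1, .trans ?_ (h.maxSimpleMul_minSimpleMul i).1⟩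
  all_goals
    unfold maxSimpleMul
    split_ifs with hu
  exacts [BruhatLE.refl _, bruhatLE_simple_mul hu, simple_mul_bruhatLE hu, BruhatLE.refl _]

theorem _root_.BruhatLE.bruhatLE_maxMulSimple {u w : W} (h : BruhatLE cs u w) (i : B) :
    BruhatLE cs u (cs.maxMulSimple w i) ∧ BruhatLE cs (u * s i) (cs.maxMulSimple w i) := by
  have := h.inv.bruhatLE_maxSimpleMul i
  rw [← inv_maxSimpleMul_inv]
  refine ⟨by simpa using this.1.inv, by simpa using this.2.inv⟩

theorem _root_.BruhatLE.exists_bruhatLE_of_bruhatLE_mul_simple {a w : W} {i : B}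
    (h : BruhatLE cs a (w * s i)) (hw : ¬cs.IsRightDescent w i) :
    ∃ a', BruhatLE cs a' w ∧ (a = a' ∨ a = a' * s i) := by
  refine ⟨cs.minMulSimple a i, ?_, ?_⟩
  · have hws : cs.minMulSimple (w * s i) i = w := by
      rw [minMulSimple, if_pos ((cs.isRightDescent_iff_not_isRightDescent_mul).mpr
        (by rwa [simple_mul_simple_cancel_right])), simple_mul_simple_cancel_right]
    simpa only [hws] using (h.maxMulSimple_minMulSimple i).2
  · unfold minMulSimple
    split_ifs
    exacts [Or.inr (simple_mul_simple_cancel_right cs i).symm, Or.inl rfl]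

section Longest

variable {w₀ : W}

theorem isRightInversion_of_forall_length_le (hw₀ : ∀ w, ℓ w ≤ ℓ w₀) {t : W}
    (ht : cs.IsReflection t) : cs.IsRightInversion w₀ t :=
  ⟨ht, lt_of_le_of_ne (hw₀ _) (ht.length_mul_left_ne w₀)⟩

theorem isRightDescent_longest_mul (hw₀ : ∀ w, ℓ w ≤ ℓ w₀) {v : W} {i : B}
    (hv : ¬cs.IsRightDescent v i) : cs.IsRightDescent (w₀ * v) i := by
  rw [← isRightInversion_simple_iff_isRightDescent,
    ← inversionParity_eq_one_iff cs (cs.isReflection_simple i), inversionParity_mul,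
    inversionParity_eq_zero_of_length_lt cs, zero_add, inversionParity_eq_one_iff cs]
  · exact isRightInversion_of_forall_length_le hw₀ ((cs.isReflection_simple i).conj v)
  · exact (cs.isReflection_simple i).conj v
  · rw [not_isRightDescent_iff] at hv
    omega

theorem length_longest_mul_add (hw₀ : ∀ w, ℓ w ≤ ℓ w₀) (v : W) : ℓ (w₀ * v) + ℓ v = ℓ w₀ := by
  induction v using cs.simple_induction_right with
  | one => simp
  | mul_simple_right v i ih =>
    by_cases hv : cs.IsRightDescent v i
    · have h := isRightDescent_longest_mul hw₀ (v := v * s i) (i := i)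
        (by rwa [← isRightDescent_iff_not_isRightDescent_mul])
      rw [isRightDescent_iff] at hv h
      rw [← mul_assoc, simple_mul_simple_cancel_right] at h
      rw [← mul_assoc]
      omega
    · have h := isRightDescent_longest_mul hw₀ hv
      rw [not_isRightDescent_iff] at hv
      rw [isRightDescent_iff] at h
      rw [← mul_assoc]
      omega

theorem length_mul_longest_add (hw₀ : ∀ w, ℓ w ≤ ℓ w₀) (v : W) : ℓ (v * w₀) + ℓ v = ℓ w₀ := by
  have hw₀' : ∀ w, ℓ w ≤ ℓ w₀⁻¹ := by simpa only [length_inv] using hw₀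
  simpa only [← mul_inv_rev, length_inv] using length_longest_mul_add hw₀' v⁻¹

theorem bruhatLE_longest (hw₀ : ∀ w, ℓ w ≤ ℓ w₀) (w : W) : BruhatLE cs w w₀ := by
  have h := length_mul_longest_add hw₀ w⁻¹
  rw [length_inv] at h
  simpa only [mul_inv_cancel_left] using
    bruhatLE_mul_of_length_mul (w := w) (u := w⁻¹ * w₀) (by rw [mul_inv_cancel_left]; omega)

theorem _root_.BruhatLE.mul_longest (hw₀ : ∀ w, ℓ w ≤ ℓ w₀) {u v : W} (h : BruhatLE cs u v) :
    BruhatLE cs (v * w₀) (u * w₀) := by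
  induction h with
  | refl => rfl
  | @tail b c _ hstep ih =>
    obtain ⟨⟨t, ht, rfl⟩, hlt⟩ := hstep
    have he : b * t * w₀ * (w₀⁻¹ * t * w₀) = b * w₀ := by
      calc _ = b * (t * t) * w₀ := by group
        _ = b * w₀ := by rw [ht.mul_self, mul_one]
    have h₁ := length_mul_longest_add hw₀ (b * t)
    have h₂ := length_mul_longest_add hw₀ b
    refine .trans ?_ ih
    rw [← he]
    exact bruhatLE_mul_reflection (by simpa using ht.conj w₀⁻¹) (by rw [he]; omega)

end Longest

section Twisted

variable {σ : W →* W}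

theorem length_map_le (hσS : ∀ i, ∃ j, σ (s i) = s j) (w : W) : ℓ (σ w) ≤ ℓ w := by
  choose f hf using hσS
  obtain ⟨ω, hω, rfl⟩ := cs.exists_isReduced w
  have hσω : σ (π ω) = π (ω.map f) := by
    simp only [wordProd, map_list_prod, List.map_map]
    exact congrArg List.prod (List.map_congr_left fun i _ => hf i)
  rw [hσω, hω.eq, ← List.length_map (f := f)]
  exact cs.length_wordProd_le _

theorem length_map (hσS : ∀ i, ∃ j, σ (s i) = s j) (hσ2 : ∀ w, σ (σ w) = w) (w : W) :
    ℓ (σ w) = ℓ w :=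
  le_antisymm (length_map_le hσS w) (by simpa only [hσ2] using length_map_le hσS (σ w))

theorem IsReflection.map (hσS : ∀ i, ∃ j, σ (s i) = s j) {t : W} (ht : cs.IsReflection t) :
    cs.IsReflection (σ t) := by
  obtain ⟨w, i, rfl⟩ := ht
  obtain ⟨j, hj⟩ := hσS i
  exact ⟨σ w, j, by simp [hj]⟩

theorem _root_.BruhatLE.map (hσS : ∀ i, ∃ j, σ (s i) = s j) (hσ2 : ∀ w, σ (σ w) = w)
    {u w : W} (h : BruhatLE cs u w) : BruhatLE cs (σ u) (σ w) := by
  induction h with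
  | refl => rfl
  | tail _ hstep ih =>
    obtain ⟨⟨t, ht, rfl⟩, hlt⟩ := hstep
    refine ih.tail ⟨⟨σ t, ht.map hσS, map_mul σ _ _⟩, ?_⟩
    rwa [length_map hσS hσ2, length_map hσS hσ2]

theorem length_simple_mul_of_inv_eq (hσS : ∀ i, ∃ j, σ (s i) = s j) (hσ2 : ∀ w, σ (σ w) = w)
    {x : W} (hx : x⁻¹ = σ x) {i j : B} (hj : σ (s i) = s j) : ℓ (s j * x) = ℓ (x * s i) := by
  rw [← length_inv, mul_inv_rev, hx, inv_simple, ← hj, ← map_mul, length_map hσS hσ2]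

theorem inv_invStep (hσ2 : ∀ w, σ (σ w) = w) {x : W} (hx : x⁻¹ = σ x) (i : B) :
    (invStep cs σ x i)⁻¹ = σ (invStep cs σ x i) := by
  have hs : (σ (s i))⁻¹ = σ (s i) := by rw [← map_inv, inv_simple]
  unfold invStep
  split_ifs with h₁ h₂
  · exact hx
  · have h := congrArg σ h₂
    rw [map_mul, map_mul, hσ2] at h
    rw [mul_inv_rev, inv_simple, hx, map_mul, h]
  · rw [mul_inv_rev, mul_inv_rev, inv_simple, hs, hx, map_mul, map_mul, hσ2, mul_assoc]

theorem inv_invWord (hσ2 : ∀ w, σ (σ w) = w) {x : W} (hx : x⁻¹ = σ x) (l : List B) :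
    (invWord cs σ x l)⁻¹ = σ (invWord cs σ x l) := by
  induction l generalizing x with
  | nil => exact hx
  | cons i l ih => exact ih (inv_invStep hσ2 hx i)

theorem invWord_append_singleton (σ : W → W) (x : W) (l : List B) (i : B) :
    invWord cs σ x (l ++ [i]) = invStep cs σ (invWord cs σ x l) i := by
  simp [invWord]

theorem invStep_eq_maxSimpleMul_maxMulSimple (hσS : ∀ i, ∃ j, σ (s i) = s j)
    (hσ2 : ∀ w, σ (σ w) = w) {x : W} (hx : x⁻¹ = σ x) {i j : B} (hj : σ (s i) = s j) :
    invStep cs σ x i = cs.maxSimpleMul j (cs.maxMulSimple x i) := by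
  have hlen := length_simple_mul_of_inv_eq hσS hσ2 hx hj
  unfold invStep maxMulSimple maxSimpleMul IsLeftDescent IsRightDescent
  rw [hj]
  by_cases hd : ℓ (x * s i) < ℓ x
  · rw [if_pos hd, if_pos hd, if_pos (by rwa [hlen])]
  have hasc : ℓ x < ℓ (x * s i) := lt_of_le_of_ne (not_lt.mp hd) (cs.length_mul_simple_ne x i).symm
  rw [if_neg hd, if_neg hd]
  by_cases hc : s j * x = x * s i
  · have hsxs : s j * (x * s i) = x := by rw [← mul_assoc, hc, simple_mul_simple_cancel_right]
    rw [if_pos hc, if_pos (by rwa [hsxs])]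
  · have hasc' : ¬ℓ (s j * (x * s i)) < ℓ (x * s i) := fun h =>
      hc (simple_mul_eq_mul_simple_of_isLeftDescent_mul_simple cs (by
        rw [IsLeftDescent, hlen]; exact hd) hd h)
    rw [if_neg hc, if_neg hasc', mul_assoc]

theorem not_isRightDescent_of_isReduced_append_singleton {l : List B} {i : B}
    (hl : cs.IsReduced (l ++ [i])) : ¬cs.IsRightDescent (π l) i := by
  have h₁ := hl.eq
  have h₂ := cs.length_wordProd_le l
  rw [wordProd_append, wordProd_singleton, List.length_append, List.length_singleton] at h₁
  rw [IsRightDescent]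
  omega

theorem exists_invWord_eq (σ : W →* W) (x : W) {l : List B} (hl : cs.IsReduced l) :
    ∃ a b, BruhatLE cs a (π l) ∧ BruhatLE cs b (π l) ∧ invWord cs σ x l = (σ a)⁻¹ * x * b := by
  induction l using List.reverseRecOn with
  | nil => exact ⟨1, 1, BruhatLE.refl _, BruhatLE.refl _, by simp [invWord]⟩
  | append_singleton l i ih =>
    obtain ⟨a, b, ha, hb, heq⟩ := ih (by simpa using hl.take l.length)
    have hasc := not_isRightDescent_of_isReduced_append_singleton hl
    have hup (c : W) (hc : BruhatLE cs c (π l)) :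
        BruhatLE cs c (π l * s i) ∧ BruhatLE cs (c * s i) (π l * s i) := by
      simpa [maxMulSimple, hasc] using hc.bruhatLE_maxMulSimple i
    rw [wordProd_append, wordProd_singleton, invWord_append_singleton, heq]
    unfold invStep
    split_ifs
    · exact ⟨a, b, (hup a ha).1, (hup b hb).1, rfl⟩
    · exact ⟨a, b * s i, (hup a ha).1, (hup b hb).2, by simp only [mul_assoc]⟩
    · refine ⟨a * s i, b * s i, (hup a ha).2, (hup b hb).2, ?_⟩
      rw [map_mul, mul_inv_rev, ← map_inv σ (s i), inv_simple]
      simp only [mul_assoc]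

theorem bruhatLE_invWord (hσS : ∀ i, ∃ j, σ (s i) = s j) (hσ2 : ∀ w, σ (σ w) = w) {x : W}
    (hx : x⁻¹ = σ x) {l : List B} (hl : cs.IsReduced l) {a b : W} (ha : BruhatLE cs a (π l))
    (hb : BruhatLE cs b (π l)) : BruhatLE cs ((σ a)⁻¹ * x * b) (invWord cs σ x l) := by
  induction l using List.reverseRecOn generalizing a b with
  | nil =>
    have h₁ (c : W) (hc : BruhatLE cs c (π [])) : c = 1 :=
      cs.length_eq_zero_iff.mp (by simpa using hc.length_le)
    rw [h₁ a ha, h₁ b hb]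
    simpa [invWord] using BruhatLE.refl x
  | append_singleton l i ih =>
    obtain ⟨j, hj⟩ := hσS i
    have hasc := not_isRightDescent_of_isReduced_append_singleton hl
    rw [wordProd_append, wordProd_singleton] at ha hb
    obtain ⟨a', ha', ha⟩ := ha.exists_bruhatLE_of_bruhatLE_mul_simple hasc
    obtain ⟨b', hb', hb⟩ := hb.exists_bruhatLE_of_bruhatLE_mul_simple hasc
    have hc := (ih (by simpa using hl.take l.length) ha' hb').bruhatLE_maxMulSimple i
    rw [invWord_append_singleton,
      invStep_eq_maxSimpleMul_maxMulSimple hσS hσ2 (inv_invWord hσ2 hx l) hj]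
    have hd : BruhatLE cs ((σ a')⁻¹ * x * b) (cs.maxMulSimple (invWord cs σ x l) i) := by
      rcases hb with rfl | rfl
      exacts [hc.1, by simpa only [mul_assoc] using hc.2]
    rcases ha with rfl | rfl
    · exact (hd.bruhatLE_maxSimpleMul j).1
    · simpa only [map_mul, hj, mul_inv_rev, inv_simple, mul_assoc] using
        (hd.bruhatLE_maxSimpleMul j).2

end Twisted

end CoxeterSystem

theorem heckeAtoms_longest_element_general
    (cs : CoxeterSystem M W) (σ : W → W)
    (hmul : ∀ u v : W, σ (u * v) = σ u * σ v)
    (hinvol : ∀ w : W, σ (σ w) = w)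
    (hgen : ∀ i : B, ∃ j : B, σ (cs.simple i) = cs.simple j)
    (w₀ : W) (hw₀ : ∀ w : W, cs.length w ≤ cs.length w₀) :
    HeckeAtoms cs σ 1 w₀ = {w : W | BruhatLE cs (σ w * w₀) w} := by
  obtain ⟨τ, rfl⟩ : ∃ τ : W →* W, ⇑τ = σ := ⟨MonoidHom.mk' σ hmul, rfl⟩
  ext w
  constructor
  · rintro ⟨l, rfl, hl, hw⟩
    obtain ⟨a, b, ha, hb, hab⟩ := cs.exists_invWord_eq τ 1 hl
    have hb' : b = τ a * w₀ := by rw [← hw, hab]; group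
    exact ((ha.map hgen hinvol).mul_longest hw₀).trans (hb' ▸ hb)
  · intro h
    obtain ⟨l, hl, rfl⟩ := cs.exists_isReduced w
    refine ⟨l, rfl, hl, ?_⟩
    have hle := cs.bruhatLE_invWord hgen hinvol (x := 1) (by simp) hl (BruhatLE.refl _) h
    rw [show (τ (cs.wordProd l))⁻¹ * 1 * (τ (cs.wordProd l) * w₀) = w₀ by group] at hle
    exact (cs.bruhatLE_longest hw₀ _).antisymm hle

/-- If `W` is finite with longest element `w₀`, then the Hecke atoms of `w₀`
are precisely the elements `w` with `w* w₀ ≤ w` in Bruhat order: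
`B_*(1, w₀) = {w ∈ W : w* w₀ ≤ w}`. -/
theorem heckeAtoms_longest_element
    (cs : CoxeterSystem M W) [Finite W] (σ : W → W)
    (hmul : ∀ u v : W, σ (u * v) = σ u * σ v)
    (hinvol : ∀ w : W, σ (σ w) = w)
    (hgen : ∀ i : B, ∃ j : B, σ (cs.simple i) = cs.simple j)
    (w₀ : W) (hw₀ : ∀ w : W, cs.length w ≤ cs.length w₀) :
    HeckeAtoms cs σ 1 w₀ = {w : W | BruhatLE cs (σ w * w₀) w} :=
  heckeAtoms_longest_element_general cs σ hmul hinvol hgen w₀ hw₀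
end
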